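/- arXiv:2102.08592 — 2 statements merged into one kernel-verified Lean document; each statement's English description precedes it below -/
import Mathlib

section
/- For every 0 ≤ r ≤ d, the truncated POD reconstruction error equals the sum of the squares of the discarded singular values: Σ_{n=1}^{Nt} Δtⁿ ‖I^n − Σ_{ℓ=1}^{r} ⟨I^n, u_ℓ⟩_W u_ℓ‖_W² = Σ_{ℓ=r+1}^{d} σ_ℓ². -/
open Matrix BigOperators

lemma my_sum_dotProduct {ι n : Type*} [Fintype n] (s : Finset ι) (f : ι → n → ℝ) (v : n → ℝ) :
    (∑ i ∈ s, f i) ⬝ᵥ v = ∑ i ∈ s, f i ⬝ᵥ v := by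
  simp only [dotProduct, Finset.sum_apply, Finset.sum_mul]
  exact Finset.sum_comm

lemma my_dotProduct_sum {ι n : Type*} [Fintype n] (s : Finset ι) (v : n → ℝ) (f : ι → n → ℝ) :
    v ⬝ᵥ (∑ i ∈ s, f i) = ∑ i ∈ s, v ⬝ᵥ f i := by
  simp only [dotProduct, Finset.sum_apply, Finset.mul_sum]
  exact Finset.sum_comm

lemma my_mulVec_sum {ι m n : Type*} [Fintype n] (s : Finset ι) (M : Matrix m n ℝ) (f : ι → n → ℝ) :
    M *ᵥ (∑ i ∈ s, f i) = ∑ i ∈ s, M *ᵥ f i := by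
  funext j
  simp only [Matrix.mulVec, dotProduct, Finset.sum_apply, Finset.mul_sum]
  exact Finset.sum_comm


/-- POD setup: snapshots `Iⁿ` are the columns of `A`, `Δt` are positive time steps,
`W` is symmetric positive definite with symmetric positive-definite square root `S`
(`S * S = W`), the weighted data matrix `Â = W^{1/2} A 𝐃^{1/2} = S * A * diag(√Δtⁿ)`
has thin SVD `Â = Û Σ̂ V̂ᵀ` with `d = rank Â`, orthonormal columns of `Û`, `V̂`, and
singular values `σ₁ ≥ … ≥ σ_d > 0`; the POD basis vectors are `u ℓ = W^{-1/2} ûₗ = S⁻¹ ûₗ`.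
STATEMENT 3: for every `0 ≤ r ≤ d`, the truncated POD reconstruction error equals
the sum of the squares of the discarded singular values `∑_{ℓ=r+1}^{d} σₗ²`. -/
theorem pod_truncation_error_eq_sum_of_discarded_singular_values
    (D Nt d : ℕ)
    (A : Matrix (Fin D) (Fin Nt) ℝ)
    (Δt : Fin Nt → ℝ) (hΔt : ∀ n, 0 < Δt n)
    (W S : Matrix (Fin D) (Fin D) ℝ)
    (hW : W.PosDef) (hWsymm : W.IsSymm)
    (hS : S.PosDef) (hSsymm : S.IsSymm) (hSW : S * S = W)
    (Uhat : Matrix (Fin D) (Fin d) ℝ) (Vhat : Matrix (Fin Nt) (Fin d) ℝ)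
    (σ : Fin d → ℝ)
    (hUhat : Uhatᵀ * Uhat = 1) (hVhat : Vhatᵀ * Vhat = 1)
    (hσpos : ∀ ℓ, 0 < σ ℓ)
    (hσmono : ∀ ℓ ℓ' : Fin d, ℓ ≤ ℓ' → σ ℓ' ≤ σ ℓ)
    (hSVD : S * A * Matrix.diagonal (fun n => Real.sqrt (Δt n))
            = Uhat * Matrix.diagonal σ * Vhatᵀ)
    (hrank : (S * A * Matrix.diagonal (fun n => Real.sqrt (Δt n))).rank = d)
    (u : Fin d → (Fin D → ℝ))
    (hu : ∀ ℓ, u ℓ = S⁻¹ *ᵥ (fun i => Uhat i ℓ))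
    : ∀ (r : ℕ), r ≤ d →
      ∑ n : Fin Nt, Δt n *
        (((fun i => A i n) - ∑ ℓ ∈ Finset.univ.filter (fun ℓ : Fin d => (ℓ : ℕ) < r),
            ((fun i => A i n) ⬝ᵥ (W *ᵥ u ℓ)) • u ℓ) ⬝ᵥ
         (W *ᵥ ((fun i => A i n) - ∑ ℓ ∈ Finset.univ.filter (fun ℓ : Fin d => (ℓ : ℕ) < r),
            ((fun i => A i n) ⬝ᵥ (W *ᵥ u ℓ)) • u ℓ)))
      = ∑ ℓ ∈ Finset.univ.filter (fun ℓ : Fin d => r ≤ (ℓ : ℕ)), σ ℓ ^ 2 := by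
  intro r hr
  have hSdet : IsUnit S.det := isUnit_iff_ne_zero.mpr hS.det_pos.ne'
  have hSinv : S * S⁻¹ = 1 := Matrix.mul_nonsing_inv _ hSdet
  -- û columns
  set uh : Fin d → (Fin D → ℝ) := fun ℓ i => Uhat i ℓ with huh
  have hUorth : ∀ ℓ ℓ' : Fin d, uh ℓ ⬝ᵥ uh ℓ' = if ℓ = ℓ' then 1 else 0 := by
    intro ℓ ℓ'
    have := congrFun (congrFun hUhat ℓ) ℓ'
    simpa [Matrix.mul_apply, Matrix.one_apply, dotProduct, huh] using this
  have hVcol : ∀ ℓ : Fin d, ∑ n : Fin Nt, Vhat n ℓ * Vhat n ℓ = 1 := by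
    intro ℓ
    have := congrFun (congrFun hVhat ℓ) ℓ
    simpa [Matrix.mul_apply, Matrix.one_apply] using this
  -- W *ᵥ u ℓ = S *ᵥ uh ℓ
  have hWu : ∀ ℓ, W *ᵥ u ℓ = S *ᵥ uh ℓ := by
    intro ℓ
    rw [hu, Matrix.mulVec_mulVec, ← hSW, Matrix.mul_assoc, hSinv, Matrix.mul_one]
  have hSu : ∀ ℓ, S *ᵥ u ℓ = uh ℓ := by
    intro ℓ
    rw [hu, Matrix.mulVec_mulVec, hSinv, Matrix.one_mulVec]
  -- symmetric moving
  have hdotS : ∀ (v w : Fin D → ℝ), v ⬝ᵥ (S *ᵥ w) = (S *ᵥ v) ⬝ᵥ w := by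
    intro v w
    rw [Matrix.dotProduct_mulVec, ← Matrix.mulVec_transpose, hSsymm]
  -- x n
  set x : Fin Nt → Fin D → ℝ := fun n => ∑ ℓ : Fin d, (σ ℓ * Vhat n ℓ) • uh ℓ with hx
  have hxcol : ∀ n, Real.sqrt (Δt n) • (S *ᵥ (fun i => A i n)) = x n := by
    intro n
    funext i
    have := congrFun (congrFun hSVD i) n
    simp only [Matrix.mul_apply, Matrix.diagonal_apply, Matrix.transpose_apply, mul_ite,
      mul_zero, ite_mul, zero_mul, Finset.sum_ite_eq', Finset.sum_ite_eq, Finset.mem_univ,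
      if_true] at this
    simp only [hx, Finset.sum_apply, Pi.smul_apply, smul_eq_mul, Matrix.mulVec, dotProduct, huh]
    rw [mul_comm (Real.sqrt (Δt n)), this]
    exact Finset.sum_congr rfl fun ℓ _ => by ring
  -- dot products of x with uh
  have hxdot : ∀ n ℓ, x n ⬝ᵥ uh ℓ = σ ℓ * Vhat n ℓ := by
    intro n ℓ
    rw [hx, my_sum_dotProduct _ _]
    simp [smul_dotProduct, hUorth, mul_ite, mul_one, mul_zero, smul_eq_mul]
  -- coefficient identity
  have hc : ∀ (n : Fin Nt) (ℓ : Fin d),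
      Real.sqrt (Δt n) * ((fun i => A i n) ⬝ᵥ (W *ᵥ u ℓ)) = σ ℓ * Vhat n ℓ := by
    intro n ℓ
    rw [hWu, hdotS, ← hxdot n ℓ, ← hxcol n, smul_dotProduct]
    simp
  -- residual vector
  set v : Fin Nt → Fin D → ℝ := fun n =>
    (fun i => A i n) - ∑ ℓ ∈ Finset.univ.filter (fun ℓ : Fin d => (ℓ : ℕ) < r),
      ((fun i => A i n) ⬝ᵥ (W *ᵥ u ℓ)) • u ℓ with hv
  set y : Fin Nt → Fin D → ℝ := fun n =>
    ∑ ℓ ∈ Finset.univ.filter (fun ℓ : Fin d => r ≤ (ℓ : ℕ)), (σ ℓ * Vhat n ℓ) • uh ℓ with hy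
  have hSv : ∀ n, Real.sqrt (Δt n) • (S *ᵥ v n) = y n := by
    intro n
    rw [hv]
    simp only
    rw [Matrix.mulVec_sub, smul_sub, hxcol n]
    have h1 : S *ᵥ (∑ ℓ ∈ Finset.univ.filter (fun ℓ : Fin d => (ℓ : ℕ) < r),
        ((fun i => A i n) ⬝ᵥ (W *ᵥ u ℓ)) • u ℓ)
        = ∑ ℓ ∈ Finset.univ.filter (fun ℓ : Fin d => (ℓ : ℕ) < r),
          ((fun i => A i n) ⬝ᵥ (W *ᵥ u ℓ)) • uh ℓ := by
      rw [my_mulVec_sum _ _]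
      exact Finset.sum_congr rfl fun ℓ _ => by rw [Matrix.mulVec_smul, hSu]
    rw [h1, Finset.smul_sum]
    have h2 : ∀ ℓ : Fin d, Real.sqrt (Δt n) • (((fun i => A i n) ⬝ᵥ (W *ᵥ u ℓ)) • uh ℓ)
        = (σ ℓ * Vhat n ℓ) • uh ℓ := by
      intro ℓ
      rw [smul_smul, hc]
    rw [Finset.sum_congr rfl fun ℓ _ => h2 ℓ]
    -- x n - ∑_{ℓ<r} = ∑_{ℓ≥r}
    have hfilt : Finset.univ.filter (fun ℓ : Fin d => ¬ (ℓ : ℕ) < r)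
        = Finset.univ.filter (fun ℓ : Fin d => r ≤ (ℓ : ℕ)) := by
      apply Finset.filter_congr
      intro ℓ _
      simp [not_lt]
    have hsplit : x n = (∑ ℓ ∈ Finset.univ.filter (fun ℓ : Fin d => (ℓ : ℕ) < r),
        (σ ℓ * Vhat n ℓ) • uh ℓ) + y n := by
      have htot := Finset.sum_filter_add_sum_filter_not (Finset.univ : Finset (Fin d))
        (fun ℓ : Fin d => (ℓ : ℕ) < r) (fun ℓ => (σ ℓ * Vhat n ℓ) • uh ℓ)
      rw [hfilt] at htot
      rw [hy]
      simp only [hx]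
      rw [← htot]
    rw [hsplit]
    abel
  have hyy : ∀ n, y n ⬝ᵥ y n
      = ∑ ℓ ∈ Finset.univ.filter (fun ℓ : Fin d => r ≤ (ℓ : ℕ)), (σ ℓ * Vhat n ℓ)^2 := by
    intro n
    rw [hy, my_sum_dotProduct _ _]
    apply Finset.sum_congr rfl
    intro ℓ hℓ
    rw [smul_dotProduct, my_dotProduct_sum _ _]
    rw [Finset.sum_eq_single ℓ]
    · rw [dotProduct_smul, hUorth, if_pos rfl]
      simp [pow_two]
    · intro ℓ' _ hne
      rw [dotProduct_smul, hUorth]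
      rw [if_neg (by exact fun h => hne h.symm)]
      simp
    · intro h; exact absurd hℓ h
  have hterm : ∀ n, Δt n * (v n ⬝ᵥ (W *ᵥ v n))
      = ∑ ℓ ∈ Finset.univ.filter (fun ℓ : Fin d => r ≤ (ℓ : ℕ)), (σ ℓ * Vhat n ℓ)^2 := by
    intro n
    rw [← hyy n, ← hSv n]
    rw [← hSW, ← Matrix.mulVec_mulVec, hdotS]
    rw [smul_dotProduct, dotProduct_smul, smul_eq_mul, smul_eq_mul,
      ← mul_assoc, Real.mul_self_sqrt (hΔt n).le]
  calc ∑ n : Fin Nt, Δt n * (v n ⬝ᵥ (W *ᵥ v n))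
      = ∑ n : Fin Nt, ∑ ℓ ∈ Finset.univ.filter (fun ℓ : Fin d => r ≤ (ℓ : ℕ)),
          (σ ℓ * Vhat n ℓ)^2 := Finset.sum_congr rfl fun n _ => hterm n
    _ = ∑ ℓ ∈ Finset.univ.filter (fun ℓ : Fin d => r ≤ (ℓ : ℕ)),
          ∑ n : Fin Nt, (σ ℓ * Vhat n ℓ)^2 := Finset.sum_comm
    _ = ∑ ℓ ∈ Finset.univ.filter (fun ℓ : Fin d => r ≤ (ℓ : ℕ)), σ ℓ ^ 2 := by
        apply Finset.sum_congr rfl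
        intro ℓ _
        have : ∑ n : Fin Nt, (σ ℓ * Vhat n ℓ)^2
            = σ ℓ ^ 2 * ∑ n : Fin Nt, Vhat n ℓ * Vhat n ℓ := by
          rw [Finset.mul_sum]
          exact Finset.sum_congr rfl fun n _ => by ring
        rw [this, hVcol, mul_one]
end

section
/- The POD basis is optimal for the weighted snapshot-reconstruction problem: for every 1 ≤ r ≤ d and for every family of vectors v₁,…,v_r ∈ ℝ^D that is orthonormal with respect to ⟨·,·⟩_W (i.e. ⟨v_i, v_j⟩_W = δ_{ij}), one has Σ_{n=1}^{Nt} Δtⁿ ‖I^n − Σ_{ℓ=1}^{r} ⟨I^n, u_ℓ⟩_W u_ℓ‖_W² ≤ Σ_{n=1}^{Nt} Δtⁿ ‖I^n − Σ_{ℓ=1}^{r} ⟨I^n, v_ℓ⟩_W v_ℓ‖_W². -/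
open Matrix BigOperators


lemma my_dotProduct_sum_s5 {D r : ℕ} (b : Fin D → ℝ) (f : Fin r → Fin D → ℝ) :
    b ⬝ᵥ (∑ ℓ, f ℓ) = ∑ ℓ, b ⬝ᵥ f ℓ := by
  simp only [dotProduct, Finset.sum_apply, Finset.mul_sum]
  exact Finset.sum_comm

lemma my_sum_dotProduct_s5 {D r : ℕ} (b : Fin D → ℝ) (f : Fin r → Fin D → ℝ) :
    (∑ ℓ, f ℓ) ⬝ᵥ b = ∑ ℓ, f ℓ ⬝ᵥ b := by
  simp only [dotProduct, Finset.sum_apply, Finset.sum_mul]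
  exact Finset.sum_comm

lemma dot_expand {D r : ℕ} (b : Fin D → ℝ) (q : Fin r → Fin D → ℝ)
    (hq : ∀ i j, q i ⬝ᵥ q j = if i = j then 1 else 0) :
    (b - ∑ ℓ, (b ⬝ᵥ q ℓ) • q ℓ) ⬝ᵥ (b - ∑ ℓ, (b ⬝ᵥ q ℓ) • q ℓ)
      = b ⬝ᵥ b - ∑ ℓ, (b ⬝ᵥ q ℓ)^2 := by
  simp only [sub_dotProduct, dotProduct_sub, my_dotProduct_sum_s5, my_sum_dotProduct_s5,
    dotProduct_smul, smul_dotProduct, smul_eq_mul, hq, mul_ite, mul_one, mul_zero,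
    Finset.sum_ite_eq, Finset.mem_univ, if_true]
  have h : ∀ ℓ, q ℓ ⬝ᵥ b = b ⬝ᵥ q ℓ := fun ℓ => dotProduct_comm _ _
  simp only [h]
  have : ∀ ℓ : Fin r, b ⬝ᵥ q ℓ * (b ⬝ᵥ q ℓ) = (b ⬝ᵥ q ℓ)^2 := fun ℓ => (sq _).symm
  simp only [this]
  ring_nf
  simp only [Finset.sum_ite_eq', Finset.mem_univ, if_true, ← sq]
  ring

lemma bessel {D r : ℕ} (b : Fin D → ℝ) (q : Fin r → Fin D → ℝ)
    (hq : ∀ i j, q i ⬝ᵥ q j = if i = j then 1 else 0) :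
    ∑ ℓ, (b ⬝ᵥ q ℓ)^2 ≤ b ⬝ᵥ b := by
  have h := dot_expand b q hq
  have h2 : (0:ℝ) ≤ (b - ∑ ℓ, (b ⬝ᵥ q ℓ) • q ℓ) ⬝ᵥ (b - ∑ ℓ, (b ⬝ᵥ q ℓ) • q ℓ) := by
    apply Finset.sum_nonneg; intro i _; exact mul_self_nonneg _
  linarith

lemma reindex_castLE {d r : ℕ} (hrd : r ≤ d) (f : Fin d → ℝ) :
    ∑ j : Fin d, (if (j:ℕ) < r then f j else 0) = ∑ ℓ : Fin r, f (Fin.castLE hrd ℓ) := by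
  rw [← Finset.sum_filter]
  have h : Finset.univ.filter (fun j : Fin d => (j:ℕ) < r)
      = Finset.univ.map (Fin.castLEEmb hrd) := by
    ext j
    simp only [Finset.mem_filter, Finset.mem_univ, true_and, Finset.mem_map,
      Fin.castLEEmb, Function.Embedding.coeFn_mk]
    constructor
    · intro hj; exact ⟨⟨j, hj⟩, rfl⟩
    · rintro ⟨ℓ, rfl⟩; exact ℓ.isLt
  rw [h, Finset.sum_map]
  rfl

lemma chebyshev_like {d : ℕ} (r : ℕ) (hr1 : 1 ≤ r) (hrd : r ≤ d)
    (τ : Fin d → ℝ) (hτ : ∀ j, 0 ≤ τ j) (hmono : ∀ j j' : Fin d, j ≤ j' → τ j' ≤ τ j)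
    (c : Fin d → ℝ) (hc0 : ∀ j, 0 ≤ c j) (hc1 : ∀ j, c j ≤ 1)
    (hsum : ∑ j, c j ≤ (r:ℝ)) :
    ∑ j, τ j * c j ≤ ∑ ℓ : Fin r, τ (Fin.castLE hrd ℓ) := by
  have hr1d : r - 1 < d := by omega
  set t : ℝ := τ ⟨r-1, hr1d⟩ with ht
  have ht0 : 0 ≤ t := hτ _
  have key : ∀ j : Fin d, τ j * c j ≤ (τ j - t) * (if (j:ℕ) < r then 1 else 0) + t * c j := by
    intro j
    by_cases hj : (j:ℕ) < r
    · simp only [hj, if_true, mul_one]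
      have hjt : t ≤ τ j := hmono j ⟨r-1, hr1d⟩ (by simp [Fin.le_def]; omega)
      nlinarith [hc1 j, hc0 j]
    · simp only [hj, if_false, mul_zero]
      have hjt : τ j ≤ t := hmono ⟨r-1, hr1d⟩ j (by simp [Fin.le_def]; omega)
      nlinarith [hc0 j, hc1 j]
  calc ∑ j, τ j * c j
      ≤ ∑ j, ((τ j - t) * (if (j:ℕ) < r then 1 else 0) + t * c j) :=
        Finset.sum_le_sum (fun j _ => key j)
    _ = ∑ j, (τ j - t) * (if (j:ℕ) < r then 1 else 0) + t * ∑ j, c j := by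
        rw [Finset.sum_add_distrib, Finset.mul_sum]
    _ ≤ ∑ j, (τ j - t) * (if (j:ℕ) < r then 1 else 0) + t * r := by
        have := mul_le_mul_of_nonneg_left hsum ht0
        linarith
    _ = ∑ j : Fin d, (if (j:ℕ) < r then τ j - t else 0) + t * r := by
        congr 1; apply Finset.sum_congr rfl; intro j _; split <;> simp
    _ = (∑ ℓ : Fin r, (τ (Fin.castLE hrd ℓ) - t)) + t * r := by
        rw [reindex_castLE]
    _ = ∑ ℓ : Fin r, τ (Fin.castLE hrd ℓ) := by
        rw [Finset.sum_sub_distrib]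
        simp [mul_comm]

lemma sum_sq_cols {D Nt d : ℕ} (Uhat : Matrix (Fin D) (Fin d) ℝ)
    (Vhat : Matrix (Fin Nt) (Fin d) ℝ) (σ : Fin d → ℝ) (hVhat : Vhatᵀ * Vhat = 1)
    (x : Fin D → ℝ) :
    ∑ n : Fin Nt, ((fun i => (Uhat * Matrix.diagonal σ * Vhatᵀ) i n) ⬝ᵥ x)^2
      = ∑ j : Fin d, (σ j)^2 * ((fun i => Uhat i j) ⬝ᵥ x)^2 := by
  set B := Uhat * Matrix.diagonal σ * Vhatᵀ with hB
  have h1 : ∀ n, ((fun i => B i n) ⬝ᵥ x) = (Bᵀ *ᵥ x) n := by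
    intro n; simp [dotProduct, mulVec, transpose_apply, mul_comm]
  simp only [h1]
  have h2 : ∑ n : Fin Nt, ((Bᵀ *ᵥ x) n)^2 = (Bᵀ *ᵥ x) ⬝ᵥ (Bᵀ *ᵥ x) := by
    simp [dotProduct, sq]
  rw [h2]
  have hBT : Bᵀ = Vhat * (Matrix.diagonal σ * Uhatᵀ) := by
    rw [hB]; simp [Matrix.transpose_mul, Matrix.diagonal_transpose, Matrix.mul_assoc]
  set y := (Matrix.diagonal σ * Uhatᵀ) *ᵥ x with hy
  have h3 : Bᵀ *ᵥ x = Vhat *ᵥ y := by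
    rw [hBT, hy, ← Matrix.mulVec_mulVec]
  rw [h3]
  have h4 : (Vhat *ᵥ y) ⬝ᵥ (Vhat *ᵥ y) = y ⬝ᵥ y := by
    rw [Matrix.dotProduct_mulVec, ← Matrix.mulVec_transpose, Matrix.mulVec_mulVec,
      hVhat, Matrix.one_mulVec]
  rw [h4]
  have h5 : ∀ j, y j = σ j * ((fun i => Uhat i j) ⬝ᵥ x) := by
    intro j
    rw [hy, ← Matrix.mulVec_mulVec, Matrix.mulVec_diagonal]
    simp [Matrix.mulVec, dotProduct, Matrix.transpose_apply]
  simp only [dotProduct, h5]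
  apply Finset.sum_congr rfl
  intro j _
  ring

lemma wdot {D : ℕ} (S W : Matrix (Fin D) (Fin D) ℝ) (hSsymm : S.IsSymm)
    (hSW : S * S = W) (x y : Fin D → ℝ) :
    x ⬝ᵥ (W *ᵥ y) = (S *ᵥ x) ⬝ᵥ (S *ᵥ y) := by
  rw [← hSW, ← Matrix.mulVec_mulVec, Matrix.dotProduct_mulVec, ← Matrix.mulVec_transpose,
    hSsymm.eq]

lemma my_mulVec_sum_s5 {D r : ℕ} (M : Matrix (Fin D) (Fin D) ℝ) (f : Fin r → Fin D → ℝ) :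
    M *ᵥ (∑ ℓ, f ℓ) = ∑ ℓ, M *ᵥ f ℓ :=
  map_sum M.mulVecLin f Finset.univ

/-- POD setup: snapshots `Iⁿ` are the columns of `A`, `Δt` are positive time steps,
`W` is symmetric positive definite with symmetric positive-definite square root `S`
(`S * S = W`), the weighted data matrix `Â = W^{1/2} A 𝐃^{1/2} = S * A * diag(√Δtⁿ)`
has thin SVD `Â = Û Σ̂ V̂ᵀ` with `d = rank Â`, orthonormal columns of `Û`, `V̂`, and
singular values `σ₁ ≥ … ≥ σ_d > 0`; the POD basis vectors are `u ℓ = W^{-1/2} ûₗ = S⁻¹ ûₗ`.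
STATEMENT 5: the POD basis is optimal for the weighted snapshot-reconstruction problem:
for every `1 ≤ r ≤ d` and every family `v₁,…,v_r` orthonormal w.r.t. `⟨·,·⟩_W`, the
rank-`r` POD reconstruction error is at most the reconstruction error using `v₁,…,v_r`. -/
theorem pod_basis_optimality
    (D Nt d : ℕ)
    (A : Matrix (Fin D) (Fin Nt) ℝ)
    (Δt : Fin Nt → ℝ) (hΔt : ∀ n, 0 < Δt n)
    (W S : Matrix (Fin D) (Fin D) ℝ)
    (hW : W.PosDef) (hWsymm : W.IsSymm)
    (hS : S.PosDef) (hSsymm : S.IsSymm) (hSW : S * S = W)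
    (Uhat : Matrix (Fin D) (Fin d) ℝ) (Vhat : Matrix (Fin Nt) (Fin d) ℝ)
    (σ : Fin d → ℝ)
    (hUhat : Uhatᵀ * Uhat = 1) (hVhat : Vhatᵀ * Vhat = 1)
    (hσpos : ∀ ℓ, 0 < σ ℓ)
    (hσmono : ∀ ℓ ℓ' : Fin d, ℓ ≤ ℓ' → σ ℓ' ≤ σ ℓ)
    (hSVD : S * A * Matrix.diagonal (fun n => Real.sqrt (Δt n))
            = Uhat * Matrix.diagonal σ * Vhatᵀ)
    (hrank : (S * A * Matrix.diagonal (fun n => Real.sqrt (Δt n))).rank = d)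
    (u : Fin d → (Fin D → ℝ))
    (hu : ∀ ℓ, u ℓ = S⁻¹ *ᵥ (fun i => Uhat i ℓ))
    : ∀ (r : ℕ) (hr1 : 1 ≤ r) (hrd : r ≤ d) (v : Fin r → (Fin D → ℝ)),
      (∀ i j : Fin r, v i ⬝ᵥ (W *ᵥ v j) = if i = j then 1 else 0) →
      ∑ n : Fin Nt, Δt n *
        (((fun i => A i n) - ∑ ℓ : Fin r,
            ((fun i => A i n) ⬝ᵥ (W *ᵥ u (Fin.castLE hrd ℓ))) • u (Fin.castLE hrd ℓ)) ⬝ᵥ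
         (W *ᵥ ((fun i => A i n) - ∑ ℓ : Fin r,
            ((fun i => A i n) ⬝ᵥ (W *ᵥ u (Fin.castLE hrd ℓ))) • u (Fin.castLE hrd ℓ))))
      ≤ ∑ n : Fin Nt, Δt n *
        (((fun i => A i n) - ∑ ℓ : Fin r,
            ((fun i => A i n) ⬝ᵥ (W *ᵥ v ℓ)) • v ℓ) ⬝ᵥ
         (W *ᵥ ((fun i => A i n) - ∑ ℓ : Fin r,
            ((fun i => A i n) ⬝ᵥ (W *ᵥ v ℓ)) • v ℓ))) := by
  intro r hr1 hrd v hv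
  -- basic setup
  have hSdet : IsUnit S.det := (ne_of_gt hS.det_pos).isUnit
  have hSinv : S * S⁻¹ = 1 := Matrix.mul_nonsing_inv S hSdet
  have hSu : ∀ ℓ : Fin d, S *ᵥ u ℓ = (fun i => Uhat i ℓ) := by
    intro ℓ
    rw [hu ℓ, Matrix.mulVec_mulVec, hSinv, Matrix.one_mulVec]
  -- orthonormality of columns of Uhat
  have hUcol : ∀ j m : Fin d, (fun i => Uhat i j) ⬝ᵥ (fun i => Uhat i m)
      = if j = m then 1 else 0 := by
    intro j m
    have h := congrFun (congrFun hUhat j) m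
    simpa [Matrix.mul_apply, dotProduct, Matrix.one_apply, Matrix.transpose_apply] using h
  -- snapshot vectors
  set a : Fin Nt → (Fin D → ℝ) := fun n => (fun i => A i n) with ha
  set b : Fin Nt → (Fin D → ℝ) := fun n => S *ᵥ a n with hb
  -- key spectral identity
  have hkey : ∀ x : Fin D → ℝ,
      ∑ n : Fin Nt, Δt n * (b n ⬝ᵥ x)^2
        = ∑ j : Fin d, (σ j)^2 * ((fun i => Uhat i j) ⬝ᵥ x)^2 := by
    intro x
    have hcol : ∀ n, (fun i => (Uhat * Matrix.diagonal σ * Vhatᵀ) i n)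
        = Real.sqrt (Δt n) • b n := by
      intro n
      funext i
      rw [← hSVD]
      have hmd : (S * A * Matrix.diagonal (fun n => Real.sqrt (Δt n))) i n
          = (S * A) i n * Real.sqrt (Δt n) := Matrix.mul_diagonal _ _ _ _
      rw [hmd]
      simp only [Pi.smul_apply, smul_eq_mul, hb, ha, Matrix.mulVec, dotProduct,
        Matrix.mul_apply]
      ring
    rw [← sum_sq_cols Uhat Vhat σ hVhat x]
    apply Finset.sum_congr rfl
    intro n _
    rw [hcol n, smul_dotProduct, smul_eq_mul, mul_pow, Real.sq_sqrt (hΔt n).le]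
  -- error formula for any W-orthonormal family
  have herr : ∀ w : Fin r → (Fin D → ℝ),
      (∀ i j : Fin r, w i ⬝ᵥ (W *ᵥ w j) = if i = j then 1 else 0) →
      ∑ n : Fin Nt, Δt n *
        ((a n - ∑ ℓ : Fin r, (a n ⬝ᵥ (W *ᵥ w ℓ)) • w ℓ) ⬝ᵥ
         (W *ᵥ (a n - ∑ ℓ : Fin r, (a n ⬝ᵥ (W *ᵥ w ℓ)) • w ℓ)))
      = ∑ n : Fin Nt, Δt n * (b n ⬝ᵥ b n)
        - ∑ ℓ : Fin r, ∑ j : Fin d, (σ j)^2 * ((fun i => Uhat i j) ⬝ᵥ (S *ᵥ w ℓ))^2 := by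
    intro w hw
    set q : Fin r → (Fin D → ℝ) := fun ℓ => S *ᵥ w ℓ with hq
    have hqorth : ∀ i j : Fin r, q i ⬝ᵥ q j = if i = j then 1 else 0 := by
      intro i j
      rw [hq]
      rw [← wdot S W hSsymm hSW (w i) (w j)]
      exact hw i j
    have hcoef : ∀ n ℓ, a n ⬝ᵥ (W *ᵥ w ℓ) = b n ⬝ᵥ q ℓ := by
      intro n ℓ
      rw [wdot S W hSsymm hSW (a n) (w ℓ)]
    have hterm : ∀ n : Fin Nt,
        (a n - ∑ ℓ : Fin r, (a n ⬝ᵥ (W *ᵥ w ℓ)) • w ℓ) ⬝ᵥ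
         (W *ᵥ (a n - ∑ ℓ : Fin r, (a n ⬝ᵥ (W *ᵥ w ℓ)) • w ℓ))
        = b n ⬝ᵥ b n - ∑ ℓ : Fin r, (b n ⬝ᵥ q ℓ)^2 := by
      intro n
      rw [wdot S W hSsymm hSW]
      have hSe : S *ᵥ (a n - ∑ ℓ : Fin r, (a n ⬝ᵥ (W *ᵥ w ℓ)) • w ℓ)
          = b n - ∑ ℓ : Fin r, (b n ⬝ᵥ q ℓ) • q ℓ := by
        rw [Matrix.mulVec_sub, my_mulVec_sum_s5]
        congr 1
        apply Finset.sum_congr rfl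
        intro ℓ _
        rw [Matrix.mulVec_smul, hcoef n ℓ]
      rw [hSe]
      exact dot_expand (b n) q hqorth
    calc ∑ n : Fin Nt, Δt n *
          ((a n - ∑ ℓ : Fin r, (a n ⬝ᵥ (W *ᵥ w ℓ)) • w ℓ) ⬝ᵥ
           (W *ᵥ (a n - ∑ ℓ : Fin r, (a n ⬝ᵥ (W *ᵥ w ℓ)) • w ℓ)))
        = ∑ n : Fin Nt, (Δt n * (b n ⬝ᵥ b n) - ∑ ℓ : Fin r, Δt n * (b n ⬝ᵥ q ℓ)^2) := by
          apply Finset.sum_congr rfl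
          intro n _
          rw [hterm n, mul_sub, Finset.mul_sum]
      _ = ∑ n : Fin Nt, Δt n * (b n ⬝ᵥ b n)
            - ∑ ℓ : Fin r, ∑ n : Fin Nt, Δt n * (b n ⬝ᵥ q ℓ)^2 := by
          rw [Finset.sum_sub_distrib, Finset.sum_comm]
      _ = ∑ n : Fin Nt, Δt n * (b n ⬝ᵥ b n)
            - ∑ ℓ : Fin r, ∑ j : Fin d, (σ j)^2 * ((fun i => Uhat i j) ⬝ᵥ (S *ᵥ w ℓ))^2 := by
          congr 1
          apply Finset.sum_congr rfl
          intro ℓ _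
          exact hkey (q ℓ)
  -- W-orthonormality of the POD family
  have hupod : ∀ i j : Fin r,
      u (Fin.castLE hrd i) ⬝ᵥ (W *ᵥ u (Fin.castLE hrd j)) = if i = j then 1 else 0 := by
    intro i j
    rw [wdot S W hSsymm hSW, hSu, hSu, hUcol]
    simp [Fin.castLE_inj]
  -- rewrite both sides via herr
  rw [herr (fun ℓ => u (Fin.castLE hrd ℓ)) hupod, herr v hv]
  apply sub_le_sub_left
  -- POD side evaluates to ∑_{ℓ<r} σ_ℓ²
  have hpod : ∑ ℓ : Fin r, ∑ j : Fin d,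
      (σ j)^2 * ((fun i => Uhat i j) ⬝ᵥ (S *ᵥ u (Fin.castLE hrd ℓ)))^2
      = ∑ ℓ : Fin r, (σ (Fin.castLE hrd ℓ))^2 := by
    apply Finset.sum_congr rfl
    intro ℓ _
    rw [hSu]
    have : ∀ j : Fin d, (σ j)^2 * ((fun i => Uhat i j) ⬝ᵥ (fun i => Uhat i (Fin.castLE hrd ℓ)))^2
        = if j = Fin.castLE hrd ℓ then (σ j)^2 else 0 := by
      intro j
      rw [hUcol]
      split <;> simp
    simp only [this, Finset.sum_ite_eq', Finset.mem_univ, if_true]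
  rw [hpod]
  -- the v side is bounded by Ky Fan style argument
  set c : Fin d → ℝ := fun j => ∑ ℓ : Fin r, ((fun i => Uhat i j) ⬝ᵥ (S *ᵥ v ℓ))^2 with hc
  have hswap : ∑ ℓ : Fin r, ∑ j : Fin d, (σ j)^2 * ((fun i => Uhat i j) ⬝ᵥ (S *ᵥ v ℓ))^2
      = ∑ j : Fin d, (σ j)^2 * c j := by
    rw [Finset.sum_comm]
    apply Finset.sum_congr rfl
    intro j _
    rw [hc, Finset.mul_sum]
  rw [hswap]
  have hqorth : ∀ i j : Fin r, (S *ᵥ v i) ⬝ᵥ (S *ᵥ v j) = if i = j then 1 else 0 := by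
    intro i j
    rw [← wdot S W hSsymm hSW]
    exact hv i j
  apply chebyshev_like r hr1 hrd
  · intro j; positivity
  · intro j j' hjj'
    have h1 := hσmono j j' hjj'
    have h2 := (hσpos j').le
    nlinarith
  · intro j
    apply Finset.sum_nonneg
    intro ℓ _
    positivity
  · intro j
    have hb1 := bessel (fun i => Uhat i j) (fun ℓ => S *ᵥ v ℓ) hqorth
    have := hUcol j j
    simp only [if_pos rfl] at this
    rw [hc]
    calc ∑ ℓ : Fin r, ((fun i => Uhat i j) ⬝ᵥ (S *ᵥ v ℓ))^2
        ≤ (fun i => Uhat i j) ⬝ᵥ (fun i => Uhat i j) := hb1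
      _ = 1 := this
  · -- ∑ j, c j ≤ r
    rw [hc]
    rw [Finset.sum_comm]
    have : ∀ ℓ : Fin r, ∑ j : Fin d, ((fun i => Uhat i j) ⬝ᵥ (S *ᵥ v ℓ))^2 ≤ 1 := by
      intro ℓ
      have hb2 := bessel (S *ᵥ v ℓ) (fun j => (fun i => Uhat i j)) hUcol
      have heq : ∀ j : Fin d, ((fun i => Uhat i j) ⬝ᵥ (S *ᵥ v ℓ))^2
          = ((S *ᵥ v ℓ) ⬝ᵥ (fun i => Uhat i j))^2 := by
        intro j; rw [dotProduct_comm]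
      simp only [heq]
      calc ∑ j : Fin d, ((S *ᵥ v ℓ) ⬝ᵥ (fun i => Uhat i j))^2
          ≤ (S *ᵥ v ℓ) ⬝ᵥ (S *ᵥ v ℓ) := hb2
        _ = 1 := by rw [hqorth ℓ ℓ]; simp
    calc ∑ ℓ : Fin r, ∑ j : Fin d, ((fun i => Uhat i j) ⬝ᵥ (S *ᵥ v ℓ))^2
        ≤ ∑ ℓ : Fin r, (1:ℝ) := Finset.sum_le_sum (fun ℓ _ => this ℓ)
      _ = r := by simp
end
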